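/- Let f : F₂ⁿ → {−1,1}, let 0 < γ < 1, and let t ∈ ℕ with t ≥ 4/γ². If L ⊆ F₂ⁿ is a set of cardinality t that is (γ/2)-top with respect to f, then L contains every γ-heavy character: for every U ∈ F₂ⁿ with |f̂(U)| ≥ γ, it holds that U ∈ L. -/
import Mathlib


/-- The inner product `⟨γ,x⟩ = ∑ i, γ i * x i` over `F₂`. -/
def inner2 {n : ℕ} (γ x : Fin n → ZMod 2) : ZMod 2 := ∑ i, γ i * x i

/-- The character `χ_γ(x) = (−1)^{⟨γ,x⟩}`. -/
noncomputable def chi {n : ℕ} (γ x : Fin n → ZMod 2) : ℝ :=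
  if inner2 γ x = 0 then 1 else -1

/-- The Fourier coefficient `f̂(γ) = 2^{−n} ∑_x f(x)·χ_γ(x)`. -/
noncomputable def fhat {n : ℕ} (f : (Fin n → ZMod 2) → ℝ) (γ : Fin n → ZMod 2) : ℝ :=
  (∑ x, f x * chi γ x) / 2 ^ n

lemma zmod2_cases : ∀ a : ZMod 2, a = 0 ∨ a = 1 := by decide

lemma inner2_add_right {n : ℕ} (γ x y : Fin n → ZMod 2) :
    inner2 γ (x + y) = inner2 γ x + inner2 γ y := by
  simp [inner2, mul_add, Finset.sum_add_distrib]

lemma chi_mul {n : ℕ} (γ x y : Fin n → ZMod 2) :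
    chi γ x * chi γ y = chi γ (x + y) := by
  unfold chi
  rw [inner2_add_right]
  generalize inner2 γ x = a
  generalize inner2 γ y = b
  rcases zmod2_cases a with ha | ha <;> rcases zmod2_cases b with hb | hb <;>
    subst ha <;> subst hb <;> simp [show (1 + 1 : ZMod 2) = 0 by decide]

lemma sum_chi {n : ℕ} (z : Fin n → ZMod 2) :
    ∑ γ : Fin n → ZMod 2, chi γ z = if z = 0 then (2 ^ n : ℝ) else 0 := by
  by_cases hz : z = 0
  · simp [hz, chi, inner2, Finset.card_univ]
  · simp only [hz, if_false]
    obtain ⟨i, hi⟩ : ∃ i, z i ≠ 0 := by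
      by_contra h; push_neg at h; exact hz (funext h)
    have hzi : z i = 1 := (zmod2_cases (z i)).resolve_left hi
    have key : ∀ γ : Fin n → ZMod 2, chi (γ + Pi.single i 1) z = - chi γ z := by
      intro γ
      have h1 : inner2 (γ + Pi.single i 1) z = inner2 γ z + 1 := by
        simp [inner2, add_mul, Finset.sum_add_distrib, Pi.single_apply, ite_mul, hzi]
      unfold chi
      rw [h1]
      rcases zmod2_cases (inner2 γ z) with ha | ha <;> rw [ha] <;>
        simp [show (1 + 1 : ZMod 2) = 0 by decide]
    have h2 : ∑ γ : Fin n → ZMod 2, chi γ z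
        = ∑ γ : Fin n → ZMod 2, chi (γ + Pi.single i 1) z :=
      (Fintype.sum_equiv (Equiv.addRight (Pi.single i 1)) _ _ (fun γ => rfl)).symm
    have h3 : (∑ γ : Fin n → ZMod 2, chi γ z) + ∑ γ : Fin n → ZMod 2, chi γ z = 0 := by
      nth_rewrite 2 [h2]
      rw [Finset.sum_congr rfl (fun γ _ => key γ), ← Finset.sum_add_distrib]
      simp
    linarith

lemma parseval {n : ℕ} (f : (Fin n → ZMod 2) → ℝ) (hf : ∀ x, f x = 1 ∨ f x = -1) :
    ∑ γ : Fin n → ZMod 2, fhat f γ ^ 2 = 1 := by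
  have step : ∀ γ : Fin n → ZMod 2, fhat f γ ^ 2
      = (∑ x, ∑ y, f x * f y * chi γ (x + y)) / (2 ^ n * 2 ^ n) := by
    intro γ
    rw [fhat, div_pow, sq, Finset.sum_mul_sum]
    congr 1
    · exact Finset.sum_congr rfl fun x _ => Finset.sum_congr rfl fun y _ => by
        rw [← chi_mul γ x y]; ring
    · ring
  have hxy : ∀ x y : Fin n → ZMod 2, x + y = 0 ↔ y = x := by
    have h : ∀ a b : ZMod 2, a + b = 0 ↔ b = a := by decide
    intro x y
    constructor
    · intro hh; funext i; exact (h (x i) (y i)).1 (congrFun hh i)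
    · intro hh; subst hh; funext i; exact (h (y i) (y i)).2 rfl
  calc ∑ γ : Fin n → ZMod 2, fhat f γ ^ 2
      = (∑ x, ∑ y, f x * f y * (if x + y = 0 then (2 ^ n : ℝ) else 0)) / (2 ^ n * 2 ^ n) := by
        simp only [step, ← Finset.sum_div]
        congr 1
        rw [Finset.sum_comm]
        refine Finset.sum_congr rfl fun x _ => ?_
        rw [Finset.sum_comm]
        refine Finset.sum_congr rfl fun y _ => ?_
        rw [← Finset.mul_sum, sum_chi]
    _ = 1 := by
        have hval : ∀ x : Fin n → ZMod 2,
            (∑ y, f x * f y * (if x + y = 0 then (2 ^ n : ℝ) else 0)) = (2 ^ n : ℝ) := by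
          intro x
          rw [Finset.sum_eq_single_of_mem x (Finset.mem_univ x)]
          · have hx0 : x + x = 0 := (hxy x x).2 rfl
            rcases hf x with h | h <;> simp [h, hx0]
          · intro y _ hy
            rw [if_neg (fun h => hy ((hxy x y).1 h)), mul_zero]
        simp only [hval, Finset.sum_const, Finset.card_univ, Fintype.card_fun,
          Fintype.card_fin, ZMod.card, nsmul_eq_mul]
        push_cast
        field_simp

/-- If `L` has cardinality `t ≥ 4/γ²` and is `(γ/2)`-top with respect to `f`
(every `α ∉ L` and `β ∈ L` satisfy `|f̂(α)| ≤ |f̂(β)| + γ/2`),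
then `L` contains every `γ`-heavy character. -/
theorem top_set_contains_heavy (n : ℕ) (f : (Fin n → ZMod 2) → ℝ)
    (hf : ∀ x, f x = 1 ∨ f x = -1)
    (gam : ℝ) (hgam0 : 0 < gam) (hgam1 : gam < 1)
    (t : ℕ) (ht : 4 / gam ^ 2 ≤ (t : ℝ))
    (L : Finset (Fin n → ZMod 2)) (hcard : L.card = t)
    (htop : ∀ a ∉ L, ∀ b ∈ L, |fhat f a| ≤ |fhat f b| + gam / 2) :
    ∀ U : Fin n → ZMod 2, gam ≤ |fhat f U| → U ∈ L := by
  intro U hU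
  by_contra hUL
  have hβ : ∀ b ∈ L, gam / 2 ≤ |fhat f b| := by
    intro b hb
    have := htop U hUL b hb
    linarith
  have hsum : ∑ γ ∈ insert U L, fhat f γ ^ 2 ≤ 1 := by
    rw [← parseval f hf]
    exact Finset.sum_le_sum_of_subset_of_nonneg (Finset.subset_univ _)
      (fun γ _ _ => sq_nonneg _)
  rw [Finset.sum_insert hUL] at hsum
  have hLsum : (t : ℝ) * (gam / 2) ^ 2 ≤ ∑ γ ∈ L, fhat f γ ^ 2 := by
    rw [← hcard]
    calc (L.card : ℝ) * (gam / 2) ^ 2 = ∑ _γ ∈ L, (gam / 2) ^ 2 := by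
          rw [Finset.sum_const, nsmul_eq_mul]
      _ ≤ ∑ γ ∈ L, fhat f γ ^ 2 := by
          refine Finset.sum_le_sum fun b hb => ?_
          have h1 := hβ b hb
          calc (gam / 2) ^ 2 ≤ |fhat f b| ^ 2 :=
                pow_le_pow_left₀ (by positivity) h1 2
            _ = fhat f b ^ 2 := sq_abs _
  have hU2 : gam ^ 2 ≤ fhat f U ^ 2 := by
    calc gam ^ 2 ≤ |fhat f U| ^ 2 := pow_le_pow_left₀ hgam0.le hU 2
      _ = fhat f U ^ 2 := sq_abs _
  have ht' : 1 ≤ (t : ℝ) * (gam / 2) ^ 2 := by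
    have hg2 : (0:ℝ) < gam ^ 2 := by positivity
    rw [div_le_iff₀ hg2] at ht
    nlinarith
  nlinarith
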